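/- arXiv:2003.06330 — 6 statements merged into one kernel-verified Lean document; each statement's English description precedes it below -/
import Mathlib

section
/- In the Hecke algebra H_q(S_n), the elements R_k(p) := p·T_k + (1−p) satisfy the Yang–Baxter relation: for parameters p_{a,b} := (z_b − z_a)/(z_b − q z_a) with a < b < c and any k ∈ [1, n−2], one has R_k(p_{a,b})·R_{k+1}(p_{a,c})·R_k(p_{b,c}) = R_{k+1}(p_{b,c})·R_k(p_{a,c})·R_{k+1}(p_{a,b}). -/
/-!
Expanding both sides in the words `1, u, v, uv, vu, uvu = vuv`, using only the braid relation and
the quadratic relation `u² = (1 - q) u + q`, all coefficients agree identically except those of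
`u` and of `v`, which agree exactly when one scalar identity in `p₁, p₂, p₃, q` holds. For the
parameters `p_{a,b}, p_{a,c}, p_{b,c}` that identity is a rational-function identity in `q` and the
`z`'s.
-/

/-- The simple transposition `s_k` (0-indexed: swaps `k` and `k+1`); identity if out of range. -/
def simpleS (n k : ℕ) : Equiv.Perm (Fin n) :=
  if h : k + 1 < n then Equiv.swap ⟨k, Nat.lt_of_succ_lt h⟩ ⟨k + 1, h⟩ else 1

/-- `R(x,ρ) = ρ·x + (1-ρ)·1`. -/
def Rop {K : Type*} [Field K] {A : Type*} [Ring A] [Algebra K A] (x : A) (ρ : K) : A :=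
  ρ • x + (1 - ρ) • (1 : A)

/-- The integrable parameter `p_{a,b} = (z_b - z_a)/(z_b - q z_a)`. -/
def pparam {K : Type*} [Field K] (q za zb : K) : K := (zb - za) / (zb - q * za)

lemma mul_self_eq_of_hecke_quadratic {K : Type*} [Field K] {A : Type*} [Ring A] [Algebra K A]
    {q : K} {w : A} (h : (w + q • (1 : A)) * (w - 1) = 0) :
    w * w = (1 - q) • w + q • (1 : A) := by
  simp only [mul_sub, add_mul, smul_mul_assoc, one_mul, mul_one] at h
  linear_combination (norm := module) h

lemma Rop_yangBaxter_of_coeff {K : Type*} [Field K] {A : Type*} [Ring A] [Algebra K A]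
    {u v : A} {q : K} (p₁ p₂ p₃ : K)
    (hu : u * u = (1 - q) • u + q • (1 : A))
    (hv : v * v = (1 - q) • v + q • (1 : A))
    (hbraid : u * v * u = v * u * v)
    (hcoeff : p₁ * (1 - p₂) * p₃ * (1 - q) + p₁ * (1 - p₂) * (1 - p₃)
        + (1 - p₁) * (1 - p₂) * p₃ = (1 - p₃) * p₂ * (1 - p₁)) :
    Rop u p₁ * Rop v p₂ * Rop u p₃ = Rop v p₃ * Rop u p₂ * Rop v p₁ := by
  unfold Rop
  simp only [mul_add, add_mul, smul_mul_assoc, mul_smul_comm, mul_one, one_mul]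
  rw [hu, hv, hbraid]
  match_scalars <;> first | ring1 | linear_combination hcoeff | linear_combination -hcoeff

lemma pparam_yangBaxter_coeff {K : Type*} [Field K] {q x y w : K}
    (hxy : y - q * x ≠ 0) (hxw : w - q * x ≠ 0) (hyw : w - q * y ≠ 0) :
    let p₁ := pparam q x y
    let p₂ := pparam q x w
    let p₃ := pparam q y w
    p₁ * (1 - p₂) * p₃ * (1 - q) + p₁ * (1 - p₂) * (1 - p₃)
      + (1 - p₁) * (1 - p₂) * p₃ = (1 - p₃) * p₂ * (1 - p₁) := by
  -- `field_simp` writes `q * x` as `x * q`; match the hypotheses to that normal form.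
  rw [mul_comm q x] at hxy hxw
  rw [mul_comm q y] at hyw
  simp only [pparam, mul_comm q]
  field_simp
  ring

theorem stmt2_general {K : Type*} [Field K] {A : Type*} [Ring A] [Algebra K A]
    {n : ℕ} (q : K) (T : Equiv.Perm (Fin n) → A) (z : Fin n → K)
    (k : ℕ) (hk : k + 2 < n)
    (Hbraid : T (simpleS n k) * T (simpleS n (k + 1)) * T (simpleS n k)
      = T (simpleS n (k + 1)) * T (simpleS n k) * T (simpleS n (k + 1)))
    (Hquad : ∀ l : ℕ, l + 1 < n →
      (T (simpleS n l) + q • (1 : A)) * (T (simpleS n l) - 1) = 0)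
    (a b c : Fin n)
    (hden1 : z b - q * z a ≠ 0) (hden2 : z c - q * z a ≠ 0) (hden3 : z c - q * z b ≠ 0) :
    Rop (T (simpleS n k)) (pparam q (z a) (z b))
        * Rop (T (simpleS n (k + 1))) (pparam q (z a) (z c))
        * Rop (T (simpleS n k)) (pparam q (z b) (z c))
      = Rop (T (simpleS n (k + 1))) (pparam q (z b) (z c))
        * Rop (T (simpleS n k)) (pparam q (z a) (z c))
        * Rop (T (simpleS n (k + 1))) (pparam q (z a) (z b)) :=
  Rop_yangBaxter_of_coeff _ _ _
    (mul_self_eq_of_hecke_quadratic (Hquad k (by omega)))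
    (mul_self_eq_of_hecke_quadratic (Hquad (k + 1) (by omega)))
    Hbraid (pparam_yangBaxter_coeff hden1 hden2 hden3)

/-- The Yang–Baxter relation for the elements `R_k(p) = p·T_k + (1-p)` in the Hecke algebra:
for `a < b < c` (with nonzero denominators) and adjacent generators `T_k, T_{k+1}`,
`R_k(p_{a,b}) R_{k+1}(p_{a,c}) R_k(p_{b,c}) = R_{k+1}(p_{b,c}) R_k(p_{a,c}) R_{k+1}(p_{a,b})`. -/
theorem stmt2 {K : Type*} [Field K] {A : Type*} [Ring A] [Algebra K A]
    {n : ℕ} (q : K) (T : Equiv.Perm (Fin n) → A) (z : Fin n → K)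
    (k : ℕ) (hk : k + 2 < n)
    (Hbraid : T (simpleS n k) * T (simpleS n (k + 1)) * T (simpleS n k)
      = T (simpleS n (k + 1)) * T (simpleS n k) * T (simpleS n (k + 1)))
    (Hquad : ∀ l : ℕ, l + 1 < n →
      (T (simpleS n l) + q • (1 : A)) * (T (simpleS n l) - 1) = 0)
    (a b c : Fin n) (hab : a < b) (hbc : b < c)
    (hden1 : z b - q * z a ≠ 0) (hden2 : z c - q * z a ≠ 0) (hden3 : z c - q * z b ≠ 0) :
    Rop (T (simpleS n k)) (pparam q (z a) (z b))
        * Rop (T (simpleS n (k + 1))) (pparam q (z a) (z c))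
        * Rop (T (simpleS n k)) (pparam q (z b) (z c))
      = Rop (T (simpleS n (k + 1))) (pparam q (z b) (z c))
        * Rop (T (simpleS n k)) (pparam q (z a) (z c))
        * Rop (T (simpleS n (k + 1))) (pparam q (z a) (z b)) :=
  stmt2_general q T z k hk Hbraid Hquad a b c hden1 hden2 hden3
end

section
/- Color-position symmetry: for any sequence i = (i_1,…,i_r) of indices in [1,n−1] and parameters p = (p_1,…,p_r), write Y^{i,p} := R_{i_1}(p_1)···R_{i_r}(p_r) = Σ_π P^{i,p}_π T_π in the Hecke algebra. Then for every π ∈ S_n, the coefficient P^{i,p}_π equals the coefficient P^{rev(i),rev(p)}_{π^{-1}} in the reversed product R_{i_r}(p_r)···R_{i_1}(p_1). -/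
/-- Number of inversions (Coxeter length) of a permutation of `Fin n`. -/
def invLen {n : ℕ} (π : Equiv.Perm (Fin n)) : ℕ :=
  (Finset.univ.filter (fun p : Fin n × Fin n => p.1 < p.2 ∧ π p.2 < π p.1)).card

lemma invLen_one {n : ℕ} : invLen (1 : Equiv.Perm (Fin n)) = 0 := by
  rw [invLen, Finset.card_eq_zero, Finset.filter_eq_empty_iff]
  intro p _
  simp only [Equiv.Perm.one_apply]
  rintro ⟨h1, h2⟩
  exact absurd h2 (asymm h1)

lemma invLen_inv {n : ℕ} (π : Equiv.Perm (Fin n)) : invLen π⁻¹ = invLen π := by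
  unfold invLen
  apply Finset.card_bij' (fun p _ => (π⁻¹ p.2, π⁻¹ p.1)) (fun p _ => (π p.2, π p.1))
  · intro p hp
    simp only [Finset.mem_filter, Finset.mem_univ, true_and] at hp ⊢
    simpa using hp.symm
  · intro p hp
    simp only [Finset.mem_filter, Finset.mem_univ, true_and] at hp ⊢
    simpa using hp.symm
  · intro p hp; simp
  · intro p hp; simp

section swap
variable {n k : ℕ} (hk : k + 1 < n)

-- the comparison lemma
lemma swap_lt_iff (hk : k + 1 < n) (u v : Fin n)
    (h1 : ¬(u = ⟨k, Nat.lt_of_succ_lt hk⟩ ∧ v = ⟨k+1, hk⟩))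
    (h2 : ¬(u = ⟨k+1, hk⟩ ∧ v = ⟨k, Nat.lt_of_succ_lt hk⟩)) :
    Equiv.swap ⟨k, Nat.lt_of_succ_lt hk⟩ ⟨k+1, hk⟩ u < Equiv.swap ⟨k, Nat.lt_of_succ_lt hk⟩ ⟨k+1, hk⟩ v ↔ u < v := by
  simp only [Equiv.swap_apply_def]
  rcases u with ⟨u, hu⟩; rcases v with ⟨v, hv⟩
  simp only [Fin.ext_iff, Fin.lt_def, not_and] at *
  split_ifs <;> simp_all <;> omega

lemma invLen_swap_mul (hk : k + 1 < n) (σ : Equiv.Perm (Fin n))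
    (h : σ⁻¹ ⟨k, Nat.lt_of_succ_lt hk⟩ < σ⁻¹ ⟨k+1, hk⟩) :
    invLen (Equiv.swap ⟨k, Nat.lt_of_succ_lt hk⟩ ⟨k+1, hk⟩ * σ) = invLen σ + 1 := by
  set a : Fin n := ⟨k, Nat.lt_of_succ_lt hk⟩ with ha
  set c : Fin n := ⟨k+1, hk⟩ with hc
  have hac : a < c := by simp [ha, hc, Fin.lt_def]
  unfold invLen
  have hset : Finset.univ.filter (fun p : Fin n × Fin n =>
        p.1 < p.2 ∧ (Equiv.swap a c * σ) p.2 < (Equiv.swap a c * σ) p.1)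
      = insert (σ⁻¹ a, σ⁻¹ c)
        (Finset.univ.filter (fun p : Fin n × Fin n => p.1 < p.2 ∧ σ p.2 < σ p.1)) := by
    ext ⟨x, y⟩
    simp only [Finset.mem_insert, Finset.mem_filter, Finset.mem_univ, true_and,
      Prod.mk.injEq]
    simp only [Equiv.Perm.mul_apply]
    by_cases hc1 : σ x = a ∧ σ y = c
    · have hx : x = σ⁻¹ a := by rw [← hc1.1]; simp
      have hy : y = σ⁻¹ c := by rw [← hc1.2]; simp
      subst hx; subst hy
      simpa [hc1.1, hc1.2, Equiv.swap_apply_left, Equiv.swap_apply_right, h, hac] using h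
    · by_cases hc2 : σ x = c ∧ σ y = a
      · have hx : x = σ⁻¹ c := by rw [← hc2.1]; simp
        have hy : y = σ⁻¹ a := by rw [← hc2.2]; simp
        subst hx; subst hy
        constructor
        · rintro ⟨-, hlt⟩
          rw [hc2.1, hc2.2, Equiv.swap_apply_left, Equiv.swap_apply_right] at hlt
          exact absurd hlt (asymm hac)
        · rintro (⟨h1, -⟩ | ⟨h1, -⟩)
          · exact absurd h1.symm (ne_of_lt h)
          · exact absurd h1 (asymm h)
      · have key := swap_lt_iff hk (σ y) (σ x)
          (fun hh => hc2 ⟨hh.2, hh.1⟩) (fun hh => hc1 ⟨hh.2, hh.1⟩)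
        rw [← ha, ← hc] at key
        rw [key]
        have : ¬(x = σ⁻¹ a ∧ y = σ⁻¹ c) := by
          rintro ⟨hx, hy⟩
          exact hc1 ⟨by rw [hx]; simp, by rw [hy]; simp⟩
        tauto
  rw [hset, Finset.card_insert_of_notMem]
  simp only [Finset.mem_filter, Finset.mem_univ, true_and, not_and]
  intro _
  simp only [Equiv.Perm.inv_def, Equiv.apply_symm_apply]
  exact asymm hac

lemma invLen_dichotomy (hk : k + 1 < n) (σ : Equiv.Perm (Fin n)) :
    invLen (simpleS n k * σ) = invLen σ + 1 ∨ invLen σ = invLen (simpleS n k * σ) + 1 := by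
  rw [simpleS, dif_pos hk]
  set a : Fin n := ⟨k, Nat.lt_of_succ_lt hk⟩ with ha
  set c : Fin n := ⟨k+1, hk⟩ with hc
  by_cases h : σ⁻¹ a < σ⁻¹ c
  · exact Or.inl (invLen_swap_mul hk σ h)
  · right
    have hac : a ≠ c := by simp [ha, hc, Fin.ext_iff]
    have hne : σ⁻¹ c ≠ σ⁻¹ a := fun hh => hac ((Equiv.injective _ hh)).symm
    have h' : (Equiv.swap a c * σ)⁻¹ a < (Equiv.swap a c * σ)⁻¹ c := by
      simp only [mul_inv_rev, Equiv.Perm.mul_apply, Equiv.swap_inv,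
        Equiv.swap_apply_left, Equiv.swap_apply_right]
      exact lt_of_le_of_ne (not_lt.mp h) hne
    have := invLen_swap_mul hk (Equiv.swap a c * σ) h'
    rwa [← mul_assoc, Equiv.swap_mul_self, one_mul] at this

lemma invLen_simpleS (hk : k + 1 < n) : invLen (simpleS n k) = 1 := by
  rcases invLen_dichotomy hk 1 with h | h <;>
    rw [mul_one, invLen_one] at h <;> omega
end swap

section algebra
variable {K : Type*} [Field K] {A : Type*} [Ring A] [Algebra K A]
  {n : ℕ} (q : K) (b : Module.Basis (Equiv.Perm (Fin n)) K A)
  (Hmul : ∀ u w : Equiv.Perm (Fin n),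
      invLen (u * w) = invLen u + invLen w → b u * b w = b (u * w))
  (Hquad : ∀ k : ℕ, k + 1 < n →
      (b (simpleS n k) + q • (1 : A)) * (b (simpleS n k) - 1) = 0)

lemma simpleS_mul_self {k : ℕ} (hk : k + 1 < n) : simpleS n k * simpleS n k = 1 := by
  rw [simpleS, dif_pos hk, Equiv.swap_mul_self]

lemma simpleS_inv {k : ℕ} (hk : k + 1 < n) : (simpleS n k)⁻¹ = simpleS n k :=
  inv_eq_of_mul_eq_one_right (simpleS_mul_self hk)

include Hquad in
lemma bs_sq {k : ℕ} (hk : k + 1 < n) :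
    b (simpleS n k) * b (simpleS n k) = (1 - q) • b (simpleS n k) + q • (1 : A) := by
  have hx := Hquad k hk
  set x := b (simpleS n k)
  rw [add_mul, mul_sub, mul_sub, smul_mul_assoc, one_mul, mul_one, mul_one] at hx
  rw [sub_smul, one_smul, ← sub_eq_zero, ← hx]
  abel

include Hmul in
lemma mul_up {k : ℕ} (hk : k + 1 < n) (σ : Equiv.Perm (Fin n))
    (h : invLen (simpleS n k * σ) = invLen σ + 1) :
    b (simpleS n k) * b σ = b (simpleS n k * σ) :=
  Hmul _ _ (by rw [h, invLen_simpleS hk, add_comm])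

include Hmul Hquad in
lemma mul_down {k : ℕ} (hk : k + 1 < n) (σ : Equiv.Perm (Fin n))
    (h : invLen σ = invLen (simpleS n k * σ) + 1) :
    b (simpleS n k) * b σ = (1 - q) • b σ + q • b (simpleS n k * σ) := by
  have hup : b (simpleS n k) * b (simpleS n k * σ) = b σ := by
    have := mul_up b Hmul hk (simpleS n k * σ)
      (by rw [← mul_assoc, simpleS_mul_self hk, one_mul, ← h])
    rwa [← mul_assoc, simpleS_mul_self hk, one_mul] at this
  conv_lhs => rw [← hup, ← mul_assoc, bs_sq q b Hquad hk]
  rw [add_mul, smul_mul_assoc, smul_mul_assoc, one_mul, hup]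

include Hmul Hquad in
lemma mul_down_right {k : ℕ} (hk : k + 1 < n) (τ : Equiv.Perm (Fin n))
    (h : invLen τ = invLen (τ * simpleS n k) + 1) :
    b τ * b (simpleS n k) = (1 - q) • b τ + q • b (τ * simpleS n k) := by
  have hup : b (τ * simpleS n k) * b (simpleS n k) = b τ := by
    have := Hmul (τ * simpleS n k) (simpleS n k)
      (by rw [mul_assoc, simpleS_mul_self hk, mul_one, invLen_simpleS hk, ← h])
    rwa [mul_assoc, simpleS_mul_self hk, mul_one] at this
  conv_lhs => rw [← hup, mul_assoc, bs_sq q b Hquad hk]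
  rw [mul_add, mul_smul_comm, mul_smul_comm, mul_one, hup]

include Hmul Hquad in
lemma key_coeff {k : ℕ} (hk : k + 1 < n) (σ π : Equiv.Perm (Fin n)) :
    b.repr (b (simpleS n k) * b σ) π = b.repr (b σ⁻¹ * b (simpleS n k)) π⁻¹ := by
  have hinv1 : σ⁻¹ * simpleS n k = (simpleS n k * σ)⁻¹ := by
    rw [mul_inv_rev, simpleS_inv hk]
  have hlen1 : invLen (σ⁻¹ * simpleS n k) = invLen (simpleS n k * σ) := by
    rw [hinv1, invLen_inv]
  have hiff : ∀ τ : Equiv.Perm (Fin n), (τ = π ↔ τ⁻¹ = π⁻¹) := fun τ => inv_inj.symm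
  rcases invLen_dichotomy hk σ with h | h
  · rw [mul_up b Hmul hk σ h,
      Hmul σ⁻¹ (simpleS n k) (by rw [hlen1, h, invLen_inv, invLen_simpleS hk]),
      Module.Basis.repr_self, Module.Basis.repr_self, Finsupp.single_apply, Finsupp.single_apply, hinv1]
    simp [hiff (simpleS n k * σ)]
  · rw [mul_down q b Hmul Hquad hk σ h,
      mul_down_right q b Hmul Hquad hk σ⁻¹
        (by rw [invLen_inv, hlen1]; exact h),
      map_add, map_add, map_smul, map_smul, map_smul, map_smul]
    simp only [Finsupp.add_apply, Finsupp.smul_apply, Module.Basis.repr_self,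
      Finsupp.single_apply, smul_eq_mul, hinv1]
    rw [if_congr (hiff σ) rfl rfl, if_congr (hiff (simpleS n k * σ)) rfl rfl]
end algebra

section main
variable {K : Type*} [Field K] {A : Type*} [Ring A] [Algebra K A]
  {n : ℕ} (q : K) (b : Module.Basis (Equiv.Perm (Fin n)) K A)
  (Hone : b 1 = 1)
  (Hmul : ∀ u w : Equiv.Perm (Fin n),
      invLen (u * w) = invLen u + invLen w → b u * b w = b (u * w))
  (Hquad : ∀ k : ℕ, k + 1 < n →
      (b (simpleS n k) + q • (1 : A)) * (b (simpleS n k) - 1) = 0)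

include Hone Hmul Hquad in
lemma main_list (l : List (ℕ × K)) (hl : ∀ x ∈ l, x.1 + 1 < n) (π : Equiv.Perm (Fin n)) :
    b.repr ((l.map fun x => Rop (b (simpleS n x.1)) x.2).prod) π
      = b.repr ((l.reverse.map fun x => Rop (b (simpleS n x.1)) x.2).prod) π⁻¹ := by
  induction l generalizing π with
  | nil =>
    simp only [List.map_nil, List.prod_nil, List.reverse_nil, ← Hone, Module.Basis.repr_self,
      Finsupp.single_apply]
    rw [if_congr (inv_inj.symm : (1:Equiv.Perm (Fin n)) = π ↔ 1⁻¹ = π⁻¹) rfl rfl, inv_one]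
  | cons x l ih =>
    have hx := hl x (List.mem_cons_self (a := x) (l := l))
    have hl' : ∀ y ∈ l, y.1 + 1 < n := fun y hy => hl y (List.mem_cons_of_mem x hy)
    set s := simpleS n x.1 with hs
    set P := (l.map fun y => Rop (b (simpleS n y.1)) y.2).prod with hP
    set Q := (l.reverse.map fun y => Rop (b (simpleS n y.1)) y.2).prod with hQ
    have hPQ : ∀ τ, b.repr P τ = b.repr Q τ⁻¹ := fun τ => ih hl' τ
    have hQs : Q = ∑ σ : Equiv.Perm (Fin n), b.repr P σ • b σ⁻¹ := by
      rw [← Module.Basis.sum_repr b Q]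
      exact (Fintype.sum_equiv (Equiv.inv (Equiv.Perm (Fin n))) _ _
        (fun σ => by simp only [Equiv.inv_apply]; rw [hPQ σ])).symm
    have hmain : b.repr (b s * P) π = b.repr (Q * b s) π⁻¹ := by
      calc b.repr (b s * P) π
          = ∑ σ : Equiv.Perm (Fin n), b.repr P σ * b.repr (b s * b σ) π := by
            conv_lhs => rw [← Module.Basis.sum_repr b P]
            rw [Finset.mul_sum, map_sum, Finsupp.finset_sum_apply]
            exact Finset.sum_congr rfl fun σ _ => by
              rw [mul_smul_comm, map_smul, Finsupp.smul_apply, smul_eq_mul]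
        _ = ∑ σ : Equiv.Perm (Fin n), b.repr P σ * b.repr (b σ⁻¹ * b s) π⁻¹ :=
            Finset.sum_congr rfl fun σ _ => by
              rw [key_coeff q b Hmul Hquad hx σ π]
        _ = b.repr (Q * b s) π⁻¹ := by
            rw [hQs, Finset.sum_mul, map_sum, Finsupp.finset_sum_apply]
            exact (Finset.sum_congr rfl fun σ _ => by
              rw [smul_mul_assoc, map_smul, Finsupp.smul_apply, smul_eq_mul]).symm
    rw [List.map_cons, List.prod_cons, List.reverse_cons, List.map_append, List.prod_append,
      List.map_singleton, List.prod_singleton, ← hP, ← hQ, ← hs]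
    rw [Rop, add_mul, mul_add, smul_mul_assoc, smul_mul_assoc, one_mul,
      mul_smul_comm, mul_smul_comm, mul_one, map_add, map_add, map_smul, map_smul,
      map_smul, map_smul]
    simp only [Finsupp.add_apply, Finsupp.smul_apply, smul_eq_mul]
    rw [hPQ π, hmain]
end main

lemma ofFn_rev {α : Type*} {r : ℕ} (f : Fin r → α) :
    List.ofFn (fun j => f j.rev) = (List.ofFn f).reverse := by
  apply List.ext_getElem
  · simp
  · intro m h1 h2
    simp only [List.length_ofFn] at h1
    simp only [List.getElem_ofFn, List.getElem_reverse, List.length_ofFn]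
    congr 1
    apply Fin.ext
    simp only [Fin.rev]
    omega

/-- Color-position symmetry: the coefficient of `T_π` in
`Y^{i,p} = R_{i_1}(p_1)⋯R_{i_r}(p_r)` equals the coefficient of `T_{π⁻¹}` in the
reversed product `Y^{rev(i),rev(p)} = R_{i_r}(p_r)⋯R_{i_1}(p_1)`. -/
theorem stmt4 {K : Type*} [Field K] {A : Type*} [Ring A] [Algebra K A]
    {n r : ℕ} (q : K) (b : Module.Basis (Equiv.Perm (Fin n)) K A)
    (Hone : b 1 = 1)
    (Hmul : ∀ u w : Equiv.Perm (Fin n),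
      invLen (u * w) = invLen u + invLen w → b u * b w = b (u * w))
    (Hquad : ∀ k : ℕ, k + 1 < n →
      (b (simpleS n k) + q • (1 : A)) * (b (simpleS n k) - 1) = 0)
    (i : Fin r → ℕ) (hi : ∀ j, i j + 1 < n) (p : Fin r → K)
    (π : Equiv.Perm (Fin n)) :
    b.repr ((List.ofFn fun j => Rop (b (simpleS n (i j))) (p j)).prod) π
      = b.repr ((List.ofFn fun j => Rop (b (simpleS n (i j.rev))) (p j.rev)).prod) π⁻¹ := by
  set l : List (ℕ × K) := List.ofFn fun j => (i j, p j) with hldef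
  have h1 : (List.ofFn fun j => Rop (b (simpleS n (i j))) (p j))
      = l.map fun x => Rop (b (simpleS n x.1)) x.2 := by
    rw [hldef, List.map_ofFn]; rfl
  have h2 : (List.ofFn fun j => Rop (b (simpleS n (i j.rev))) (p j.rev))
      = l.reverse.map fun x => Rop (b (simpleS n x.1)) x.2 := by
    rw [List.map_reverse, ← h1]
    exact ofFn_rev (fun j => Rop (b (simpleS n (i j))) (p j))
  rw [h1, h2]
  exact main_list q b Hone Hmul Hquad l
    (by intro x hx; rw [hldef, List.mem_ofFn] at hx; obtain ⟨j, rfl⟩ := hx; exact hi j) π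
end

section
/- For integer vectors d, u ∈ Z^m with d_i < u_i (or more generally d_i ≤ u_i), and any subset I ⊆ [1,m], the cardinality of the intersection ∩_{i∈I} {j ∈ Z : d_i+1 ≤ j ≤ u_i} equals max(0, min_{i∈I} u_i − max_{i∈I} d_i), which in turn equals min{IM^+_{i,j} : i,j ∈ I}, where IM^+_{i,j} = max(0, min(u_i,u_j) − max(d_i,d_j)). -/
/-! Since `[d_i+1, u_i] = (d_i, u_i]`, an intersection of such intervals is the interval
`(max d_i, min u_i]`, whose size is the truncated difference `max 0 (min u_i - max d_i)`. -/

namespace Finset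

theorem inf'_Ioc {ι α : Type*} [LinearOrder α] [LocallyFiniteOrder α] (s : Finset ι)
    (hs : s.Nonempty) (a b : ι → α) :
    s.inf' hs (fun i => Ioc (a i) (b i)) = Ioc (s.sup' hs a) (s.inf' hs b) := by
  ext x
  simp only [mem_inf', mem_Ioc, sup'_lt_iff, le_inf'_iff]
  exact ⟨fun h => ⟨fun i hi => (h i hi).1, fun i hi => (h i hi).2⟩,
    fun h i hi => ⟨h.1 i hi, h.2 i hi⟩⟩

/-- The pair `(argmin b, argmax a)` attains the minimum of the pairwise overlaps, and every other
pair overlaps at least as much. -/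
theorem max_zero_inf'_sub_sup'_eq_inf'_product {ι α : Type*} [AddCommGroup α] [LinearOrder α]
    [IsOrderedAddMonoid α] (s : Finset ι) (hs : s.Nonempty) (a b : ι → α) :
    max 0 (s.inf' hs b - s.sup' hs a)
      = (s ×ˢ s).inf' (hs.product hs)
          (fun p => max 0 (min (b p.1) (b p.2) - max (a p.1) (a p.2))) := by
  apply le_antisymm
  · refine le_inf' _ _ fun p hp => ?_
    obtain ⟨hp₁, hp₂⟩ := mem_product.1 hp
    exact max_le_max le_rfl <| sub_le_sub
      (le_min (inf'_le b hp₁) (inf'_le b hp₂)) (max_le (le_sup' a hp₁) (le_sup' a hp₂))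
  · obtain ⟨i, hi, hbi⟩ := exists_mem_eq_inf' hs b
    obtain ⟨j, hj, haj⟩ := exists_mem_eq_sup' hs a
    calc (s ×ˢ s).inf' (hs.product hs) _
        ≤ max 0 (min (b i) (b j) - max (a i) (a j)) :=
          inf'_le _ (b := (i, j)) (mem_product.2 ⟨hi, hj⟩)
      _ ≤ max 0 (s.inf' hs b - s.sup' hs a) := by
        rw [hbi, haj]
        exact max_le_max le_rfl (sub_le_sub (min_le_left _ _) (le_max_right _ _))

end Finset

theorem Int.card_Ioc_eq_max (a b : ℤ) : ((Finset.Ioc a b).card : ℤ) = max 0 (b - a) := by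
  rw [Int.card_Ioc, Int.toNat_eq_max, max_comm]

theorem stmt10_general {m : ℕ} (d u : Fin m → ℤ)
    (I : Finset (Fin m)) (hI : I.Nonempty) :
    (((I.inf' hI fun i => Finset.Icc (d i + 1) (u i)).card : ℤ)
        = max 0 (I.inf' hI u - I.sup' hI d)) ∧
    (max 0 (I.inf' hI u - I.sup' hI d)
        = (I ×ˢ I).inf' (hI.product hI)
            (fun p => max 0 (min (u p.1) (u p.2) - max (d p.1) (d p.2)))) := by
  refine ⟨?_, I.max_zero_inf'_sub_sup'_eq_inf'_product hI d u⟩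
  simp only [Finset.Icc_add_one_left_eq_Ioc]
  rw [Finset.inf'_Ioc, Int.card_Ioc_eq_max]

/-- For integer vectors `d, u` with `d_i ≤ u_i` and a nonempty `I ⊆ [1,m]`, the cardinality of
`∩_{i∈I} [d_i+1, u_i]` (integer intervals) equals `max(0, min_{i∈I} u_i − max_{i∈I} d_i)`,
which equals `min{IM⁺_{i,j} : i,j ∈ I}` where `IM⁺_{i,j} = max(0, min(u_i,u_j) − max(d_i,d_j))`. -/
theorem stmt10 {m : ℕ} (d u : Fin m → ℤ) (hdu : ∀ i, d i ≤ u i)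
    (I : Finset (Fin m)) (hI : I.Nonempty) :
    (((I.inf' hI fun i => Finset.Icc (d i + 1) (u i)).card : ℤ)
        = max 0 (I.inf' hI u - I.sup' hI d)) ∧
    (max 0 (I.inf' hI u - I.sup' hI d)
        = (I ×ˢ I).inf' (hI.product hI)
            (fun p => max 0 (min (u p.1) (u p.2) - max (d p.1) (d p.2)))) :=
  stmt10_general d u I hI
end

section
/- Consequence of the flip for height functions: fix i, j ∈ [1,n] with i+j = n, and suppose π, π' ∈ S_n satisfy H^{i,j}_{π'} = rot_{i,j}(H^{i,j}_π) and V^{i,j}_{π'} = V^{i,j}_π, where rot_{i,j}({(l_s,r_s)}) := {(i+j+1−r_s, i+j+1−l_s)}. Then for all i_1 ≥ i and j_0 ≤ j one has Ht_π(i_1, j_0) = Ht_{π'}(i+j−j_0, i+j−i_1), where Ht_τ(a,b) := #{c > a : τ(c) ≤ b}. -/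
/-- Height function of a permutation of `{1,…,n}` (realized as `Equiv.Perm (Fin n)` with
1-indexed labels `c ↦ c+1`): `Ht_π(i,j) = #{c > i : π(c) ≤ j}`. -/
def Htf {n : ℕ} (π : Equiv.Perm (Fin n)) (i j : ℕ) : ℕ :=
  (Finset.univ.filter fun c : Fin n => i < (c : ℕ) + 1 ∧ (π c : ℕ) + 1 ≤ j).card

/-- Horizontal boundary data `H^{i,j}_π = {(a,π(a)) : a > i, π(a) ≤ j}` (1-indexed). -/
def Hbd {n : ℕ} (π : Equiv.Perm (Fin n)) (i j : ℕ) : Finset (ℕ × ℕ) :=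
  (Finset.univ.filter fun c : Fin n => i < (c : ℕ) + 1 ∧ (π c : ℕ) + 1 ≤ j).image
    fun c : Fin n => ((c : ℕ) + 1, (π c : ℕ) + 1)

/-- Vertical boundary data `V^{i,j}_π = {(a,π(a)) : a ≤ i, π(a) > j}` (1-indexed). -/
def Vbd {n : ℕ} (π : Equiv.Perm (Fin n)) (i j : ℕ) : Finset (ℕ × ℕ) :=
  (Finset.univ.filter fun c : Fin n => (c : ℕ) + 1 ≤ i ∧ j < (π c : ℕ) + 1).image
    fun c : Fin n => ((c : ℕ) + 1, (π c : ℕ) + 1)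

private lemma mem_Hbd_bounds {n : ℕ} {τ : Equiv.Perm (Fin n)} {i j : ℕ} {p : ℕ × ℕ}
    (hp : p ∈ Hbd τ i j) : i < p.1 ∧ p.1 ≤ n ∧ 1 ≤ p.2 ∧ p.2 ≤ j := by
  simp only [Hbd, Finset.mem_image, Finset.mem_filter] at hp
  obtain ⟨c, ⟨-, h1, h2⟩, rfl⟩ := hp
  have := c.isLt
  simp only []
  omega

private lemma Htf_eq_card_filter {n : ℕ} (τ : Equiv.Perm (Fin n)) (i j a b : ℕ)
    (ha : i ≤ a) (hb : b ≤ j) :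
    Htf τ a b = ((Hbd τ i j).filter fun p => a < p.1 ∧ p.2 ≤ b).card := by
  unfold Htf Hbd
  rw [Finset.filter_image, Finset.card_image_of_injective]
  · congr 1
    rw [Finset.filter_filter]
    ext c
    simp only [Finset.mem_filter, Finset.mem_univ, true_and]
    omega
  · intro c c' h
    have : (c : ℕ) = (c' : ℕ) := by
      have := congrArg Prod.fst h
      simpa using this
    exact Fin.val_injective this

/-- Consequence of the flip for height functions: if `i + j = n`,
`H^{i,j}_{π'} = rot_{i,j}(H^{i,j}_π)` and `V^{i,j}_{π'} = V^{i,j}_π`, then for all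
`i₁ ≥ i` and `j₀ ≤ j`, `Ht_π(i₁,j₀) = Ht_{π'}(i+j−j₀, i+j−i₁)`. -/
theorem stmt14 {n : ℕ} (i j : ℕ) (hij : i + j = n) (hi : 1 ≤ i) (hj : 1 ≤ j)
    (π π' : Equiv.Perm (Fin n))
    (hH : Hbd π' i j
      = (Hbd π i j).image fun p => (i + j + 1 - p.2, i + j + 1 - p.1))
    (hV : Vbd π' i j = Vbd π i j) :
    ∀ i1 j0 : ℕ, i ≤ i1 → i1 ≤ n → 1 ≤ j0 → j0 ≤ j →
      Htf π i1 j0 = Htf π' (i + j - j0) (i + j - i1) := by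
  intro i1 j0 hi1 hi1n hj0 hj0j
  rw [Htf_eq_card_filter π i j i1 j0 hi1 hj0j,
      Htf_eq_card_filter π' i j (i + j - j0) (i + j - i1) (by omega) (by omega),
      hH, Finset.filter_image]
  rw [Finset.card_image_of_injOn]
  · congr 1
    apply Finset.filter_congr
    intro p hp
    have hb := mem_Hbd_bounds hp
    simp only
    constructor <;> intro h <;> omega
  · intro p hp q hq h
    have hbp := mem_Hbd_bounds (Finset.mem_filter.mp hp).1
    have hbq := mem_Hbd_bounds (Finset.mem_filter.mp hq).1
    have h1 := congrArg Prod.fst h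
    have h2 := congrArg Prod.snd h
    simp only at h1 h2
    have : p.1 = q.1 ∧ p.2 = q.2 := by omega
    exact Prod.ext this.1 this.2
end

section
/- Bounded affine permutation from a matrix: let A be a full-rank M×n complex matrix with columns A_1,…,A_n extended periodically by A_{i+n} = A_i. Define f_A(i) := min{j ≥ i : A_i ∈ Span(A_{i+1},…,A_j)}. Then f_A is well-defined and satisfies: f_A is a bijection Z → Z, f_A(i+n) = f_A(i) + n, and i ≤ f_A(i) ≤ i + n for all i ∈ Z. -/
/-!
If `v i` first lies in the span of `v (i+1), …, v k` at `k = f i`, then the exchange lemma puts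
`v k` in the span of `v i, …, v (k-1)`. So if `f i₁ = f i₂ = k` with `i₁ < i₂`, then `v k` is
already in the span of `v (i₁+1), …, v (k-1)`, and `v i₁` would lie in that span too,
contradicting the minimality of `k`. Hence `f` is injective. Since `f` commutes with translation
by the period `n`, it induces an injective, hence bijective, self-map of the finite set `ZMod n`,
and surjectivity of `f` follows.
-/

open Set Submodule Function

theorem Function.Periodic.image_Ioc_add {α : Type*} {v : ℤ → α} {p : ℤ} (hper : Periodic v p)
    (a b : ℤ) : v '' Ioc (a + p) (b + p) = v '' Ioc a b := by
  rw [← image_add_const_Ioc, image_image]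
  exact congrArg (· '' Ioc a b) (funext hper)

section SpanReach

variable (K : Type*) {V : Type*} [DivisionRing K] [AddCommGroup V] [Module K V]

-- `f_A(i)` is the least element of `spanReachSet ℂ v i`.
def spanReachSet (v : ℤ → V) (i : ℤ) : Set ℤ :=
  {j | i ≤ j ∧ v i ∈ span K (v '' Ioc i j)}

variable {K} {v : ℤ → V}

theorem add_mem_spanReachSet {p : ℤ} (hp : 0 < p) (hper : Periodic v p) (i : ℤ) :
    i + p ∈ spanReachSet K v i :=
  ⟨by omega, subset_span ⟨i + p, ⟨by omega, le_rfl⟩, hper i⟩⟩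

theorem exists_isLeast_spanReachSet {p : ℤ} (hp : 0 < p) (hper : Periodic v p) (i : ℤ) :
    ∃ k, IsLeast (spanReachSet K v i) k := by
  obtain ⟨k, hk, hmin⟩ := Int.exists_least_of_bdd (P := (· ∈ spanReachSet K v i))
    ⟨i, fun _ hj => hj.1⟩ ⟨i + p, add_mem_spanReachSet hp hper i⟩
  exact ⟨k, hk, hmin⟩

theorem mem_spanReachSet_add_iff {p : ℤ} (hper : Periodic v p) (i j : ℤ) :
    j ∈ spanReachSet K v (i + p) ↔ j - p ∈ spanReachSet K v i := by
  have hj : j = j - p + p := by ring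
  rw [spanReachSet, spanReachSet, mem_ofPred_eq, mem_ofPred_eq, hper, hj,
    hper.image_Ioc_add, ← hj]
  constructor <;> rintro ⟨hle, hmem⟩ <;> exact ⟨by omega, hmem⟩

theorem IsLeast.spanReachSet_add {p : ℤ} (hper : Periodic v p) {i k : ℤ}
    (h : IsLeast (spanReachSet K v i) k) : IsLeast (spanReachSet K v (i + p)) (k + p) := by
  refine ⟨(mem_spanReachSet_add_iff hper i _).2 (by simpa using h.1), fun j hj => ?_⟩
  have := h.2 ((mem_spanReachSet_add_iff hper i j).1 hj)
  omega

theorem IsLeast.notMem_span_Ioo {i k : ℤ} (h : IsLeast (spanReachSet K v i) k) (hik : i < k) :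
    v i ∉ span K (v '' Ioo i k) := by
  rw [← Ioc_sub_one_right_eq_Ioo]
  intro hmem
  have := h.2 ⟨by omega, hmem⟩
  omega

theorem IsLeast.mem_span_Ico {i k : ℤ} (h : IsLeast (spanReachSet K v i) k) :
    v k ∈ span K (v '' Ico i k) := by
  obtain ⟨hik, hmem⟩ := h.1
  rcases hik.eq_or_lt with rfl | hik
  · rw [Ioc_self, image_empty, span_empty, mem_bot] at hmem
    rw [hmem]
    exact zero_mem _
  · rw [← Ioo_insert_right hik, image_insert_eq] at hmem
    have := mem_span_insert_exchange hmem (h.notMem_span_Ioo hik)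
    rwa [← image_insert_eq, Ioo_insert_left hik] at this

theorem IsLeast.spanReachSet_injective {i₁ i₂ k : ℤ} (h₁ : IsLeast (spanReachSet K v i₁) k)
    (h₂ : IsLeast (spanReachSet K v i₂) k) : i₁ = i₂ := by
  wlog hlt : i₁ < i₂ generalizing i₁ i₂
  · rcases (not_lt.1 hlt).eq_or_lt with heq | hgt
    · exact heq.symm
    · exact (this h₂ h₁ hgt).symm
  have hk : i₁ < k := hlt.trans_le h₂.1.1
  have hvk : v k ∈ span K (v '' Ioo i₁ k) :=
    span_mono (image_mono (Ico_subset_Ioo_left hlt)) h₂.mem_span_Ico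
  have hmem := h₁.1.2
  rw [← Ioo_insert_right hk, image_insert_eq, span_insert_eq_span hvk] at hmem
  exact absurd hmem (h₁.notMem_span_Ioo hk)

end SpanReach

section AffinePermutation

variable {f : ℤ → ℤ} {n : ℕ}

theorem map_add_mul_of_map_add (hf : ∀ i, f (i + n) = f i + n) (c i : ℤ) :
    f (i + c * n) = f i + c * n := by
  induction c using Int.induction_on generalizing i with
  | zero => simp
  | succ c ih => rw [add_one_mul, ← add_assoc, hf, ih, add_assoc]
  | pred c ih =>
    have := hf (i + (-c - 1) * n)
    rw [show i + (-c - 1) * n + n = i + -c * n by ring, ih] at this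
    linarith

theorem intCast_map_eq_intCast_map_iff (hinj : Injective f) (hf : ∀ i, f (i + n) = f i + n)
    (a b : ℤ) : ((f a : ℤ) : ZMod n) = f b ↔ (a : ZMod n) = b := by
  simp only [ZMod.intCast_eq_intCast_iff_dvd_sub, dvd_def]
  constructor
  · rintro ⟨c, hc⟩
    refine ⟨c, ?_⟩
    have : f b = f (a + c * n) := by rw [map_add_mul_of_map_add hf]; linarith
    linarith [hinj this]
  · rintro ⟨c, hc⟩
    refine ⟨c, ?_⟩
    rw [show b = a + c * n by linarith, map_add_mul_of_map_add hf]
    ring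

theorem surjective_of_injective_of_map_add (hn : 0 < n) (hinj : Injective f)
    (hf : ∀ i, f (i + n) = f i + n) : Surjective f := by
  have : NeZero n := ⟨hn.ne'⟩
  let g : ZMod n → ZMod n := fun x => (f x.val : ZMod n)
  have hg : Injective g := fun a b hab => by
    simpa using (intCast_map_eq_intCast_map_iff hinj hf _ _).1 hab
  intro m
  obtain ⟨x, hx⟩ := Finite.surjective_of_injective hg (m : ZMod n)
  obtain ⟨c, hc⟩ := (ZMod.intCast_eq_intCast_iff_dvd_sub _ _ _).1 hx
  exact ⟨x.val + c * n, by rw [map_add_mul_of_map_add hf]; linarith⟩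

end AffinePermutation

theorem stmt15_general (M n : ℕ) (hn : 1 ≤ n)
    (v : ℤ → (Fin M → ℂ))
    (hper : ∀ i : ℤ, v (i + n) = v i) :
    ∃ f : ℤ → ℤ,
      (∀ i : ℤ,
        IsLeast {j : ℤ | i ≤ j ∧ v i ∈ Submodule.span ℂ (v '' Set.Ioc i j)} (f i)) ∧
      Function.Bijective f ∧
      (∀ i : ℤ, f (i + n) = f i + n) ∧
      (∀ i : ℤ, i ≤ f i ∧ f i ≤ i + n) := by
  have hp : (0 : ℤ) < n := by omega
  choose f hf using exists_isLeast_spanReachSet (K := ℂ) hp hper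
  have hfper : ∀ i, f (i + n) = f i + n := fun i =>
    (hf (i + n)).unique ((hf i).spanReachSet_add hper)
  have hinj : Injective f := fun a b hab => (hf a).spanReachSet_injective (hab ▸ hf b)
  exact ⟨f, hf, ⟨hinj, surjective_of_injective_of_map_add (by omega) hinj hfper⟩, hfper,
    fun i => ⟨(hf i).1.1, (hf i).2 (add_mem_spanReachSet hp hper i)⟩⟩

/-- Bounded affine permutation from a (periodically extended) full-rank family of columns:
there is a function `f : ℤ → ℤ` with `f(i)` the minimum of
`{j ≥ i : v_i ∈ Span(v_{i+1},…,v_j)}` (so `f` is well defined), and `f` is a bijection of `ℤ`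
satisfying `f(i+n) = f(i) + n` and `i ≤ f(i) ≤ i + n` for all `i ∈ ℤ`. -/
theorem stmt15 (M n : ℕ) (hM : 1 ≤ M) (hn : 1 ≤ n) (hMn : M ≤ n)
    (v : ℤ → (Fin M → ℂ))
    (hper : ∀ i : ℤ, v (i + n) = v i)
    (hspan : Submodule.span ℂ (Set.range v) = ⊤) :
    ∃ f : ℤ → ℤ,
      (∀ i : ℤ,
        IsLeast {j : ℤ | i ≤ j ∧ v i ∈ Submodule.span ℂ (v '' Set.Ioc i j)} (f i)) ∧
      Function.Bijective f ∧
      (∀ i : ℤ, f (i + n) = f i + n) ∧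
      (∀ i : ℤ, i ≤ f i ∧ f i ≤ i + n) :=
  stmt15_general M n hn v hper
end

section
/- If f(i) = j for f = f_A as above (with j > i), then A_j appears with a nonzero coefficient in every expression of A_i as a linear combination of A_{i+1},…,A_j; consequently, max{i' ≤ j : A_j ∈ Span(A_{j−1}, A_{j−2}, …, A_{i'})} = i, i.e., the analogous 'reversed' function g built from right-to-left spans satisfies g(j) = i. -/
/-! `v i` lies in the span of `v (i+1), …, v j` but not in that of `v (i+1), …, v (j-1)`. Hence
`v j` cannot lie in the latter span either (it would add nothing to it), and it cannot carry a zero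
coefficient in any expression of `v i`; the Steinitz exchange lemma swaps `v i` and `v j`, which
puts `v j` in the span of `v i, …, v (j-1)`. -/

open Set Submodule

theorem image_Ioc_eq_insert_image_Ioo {α β : Type*} [PartialOrder α] {f : α → β} {a b : α}
    (hab : a < b) : f '' Ioc a b = insert (f b) (f '' Ioo a b) := by
  rw [← Ioo_insert_right hab, image_insert_eq]

theorem image_Ico_eq_insert_image_Ioo {α β : Type*} [PartialOrder α] {f : α → β} {a b : α}
    (hab : a < b) : f '' Ico a b = insert (f a) (f '' Ioo a b) := by
  rw [← Ioo_insert_left hab, image_insert_eq]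

variable {K V : Type*} [DivisionRing K] [AddCommGroup V] [Module K V] {v : ℤ → V} {i j : ℤ}

theorem notMem_span_image_Ioo_of_isLeast (hij : i < j)
    (hleast : IsLeast {j' : ℤ | i ≤ j' ∧ v i ∈ span K (v '' Ioc i j')} j) :
    v i ∉ span K (v '' Ioo i j) := by
  intro h
  rw [← Ioc_sub_one_right_eq_Ioo] at h
  have := hleast.2 ⟨by omega, h⟩
  omega

theorem sum_Icc_smul_mem_span_image_Ioo {c : ℤ → K} (hc : c j = 0) :
    ∑ k ∈ Finset.Icc (i + 1) j, c k • v k ∈ span K (v '' Ioo i j) := by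
  rw [← Finset.sum_erase _ (by rw [hc, zero_smul])]
  refine sum_smul_mem _ _ fun k hk => subset_span (mem_image_of_mem v ?_)
  simp only [Finset.mem_erase, Finset.mem_Icc] at hk
  exact ⟨by omega, by omega⟩

theorem coeff_ne_zero_of_notMem_span_image_Ioo (hnot : v i ∉ span K (v '' Ioo i j))
    (c : ℤ → K) (hc : v i = ∑ k ∈ Finset.Icc (i + 1) j, c k • v k) : c j ≠ 0 := fun hcj =>
  hnot (hc ▸ sum_Icc_smul_mem_span_image_Ioo hcj)

theorem mem_span_image_Ico_of_exchange (hij : i < j) (hmem : v i ∈ span K (v '' Ioc i j))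
    (hnot : v i ∉ span K (v '' Ioo i j)) : v j ∈ span K (v '' Ico i j) := by
  rw [image_Ioc_eq_insert_image_Ioo hij] at hmem
  rw [image_Ico_eq_insert_image_Ioo hij]
  exact mem_span_insert_exchange hmem hnot

theorem notMem_span_image_Ioo_of_exchange (hij : i < j) (hmem : v i ∈ span K (v '' Ioc i j))
    (hnot : v i ∉ span K (v '' Ioo i j)) : v j ∉ span K (v '' Ioo i j) := by
  intro h
  rw [image_Ioc_eq_insert_image_Ioo hij, span_insert_eq_span h] at hmem
  exact hnot hmem

theorem isGreatest_of_mem_span_image_Ico (hij : i ≤ j) (hmem : v j ∈ span K (v '' Ico i j))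
    (hnot : v j ∉ span K (v '' Ioo i j)) :
    IsGreatest {i' : ℤ | i' ≤ j ∧ v j ∈ span K (v '' Ico i' j)} i :=
  ⟨⟨hij, hmem⟩, fun _ ⟨_, h⟩ =>
    not_lt.1 fun hlt => hnot (span_mono (image_mono (Ico_subset_Ioo_left hlt)) h)⟩

theorem stmt16_general (M : ℕ)
    (v : ℤ → (Fin M → ℂ))
    (i j : ℤ) (hij : i < j)
    (hleast : IsLeast {j' : ℤ | i ≤ j' ∧ v i ∈ Submodule.span ℂ (v '' Set.Ioc i j')} j) :
    (∀ c : ℤ → ℂ, v i = ∑ k ∈ Finset.Icc (i + 1) j, c k • v k → c j ≠ 0) ∧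
    v j ∈ Submodule.span ℂ (v '' Set.Ico i j) ∧
    v j ∉ Submodule.span ℂ (v '' Set.Ioo i j) ∧
    IsGreatest {i' : ℤ | i' ≤ j ∧ v j ∈ Submodule.span ℂ (v '' Set.Ico i' j)} i := by
  have hmem := hleast.1.2
  have hnot := notMem_span_image_Ioo_of_isLeast hij hleast
  have hj_mem := mem_span_image_Ico_of_exchange hij hmem hnot
  have hj_not := notMem_span_image_Ioo_of_exchange hij hmem hnot
  exact ⟨coeff_ne_zero_of_notMem_span_image_Ioo hnot, hj_mem, hj_not,
    isGreatest_of_mem_span_image_Ico hij.le hj_mem hj_not⟩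

/-- If `f(i) = j > i` where `f(i) = min{j ≥ i : v_i ∈ Span(v_{i+1},…,v_j)}`, then `v_j` appears
with nonzero coefficient in every expression of `v_i` as a linear combination of
`v_{i+1},…,v_j`; consequently `v_j ∈ Span(v_{j−1},…,v_i)`, `v_j ∉ Span(v_{j−1},…,v_{i+1})`,
and `max{i' ≤ j : v_j ∈ Span(v_{j−1},…,v_{i'})} = i` (the reversed function satisfies
`g(j) = i`). -/
theorem stmt16 (M n : ℕ) (hM : 1 ≤ M) (hn : 1 ≤ n) (hMn : M ≤ n)
    (v : ℤ → (Fin M → ℂ))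
    (hper : ∀ i : ℤ, v (i + n) = v i)
    (hspan : Submodule.span ℂ (Set.range v) = ⊤)
    (i j : ℤ) (hij : i < j)
    (hleast : IsLeast {j' : ℤ | i ≤ j' ∧ v i ∈ Submodule.span ℂ (v '' Set.Ioc i j')} j) :
    (∀ c : ℤ → ℂ, v i = ∑ k ∈ Finset.Icc (i + 1) j, c k • v k → c j ≠ 0) ∧
    v j ∈ Submodule.span ℂ (v '' Set.Ico i j) ∧
    v j ∉ Submodule.span ℂ (v '' Set.Ioo i j) ∧
    IsGreatest {i' : ℤ | i' ≤ j ∧ v j ∈ Submodule.span ℂ (v '' Set.Ico i' j)} i :=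
  stmt16_general M v i j hij hleast
end
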